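/- Let n ≥ 2 and t > 1. Define r : D_t^n × [0,1] → ℂ^{n+1} by r(x + iy, s) := (√(1 + s²‖y‖²)/‖x‖)·x + i·s·y (this is well defined since ‖x‖ ≥ 1 on Q^n). Then: (1) r(z,s) ∈ D_t^n for all z ∈ D_t^n and s ∈ [0,1]; (2) r(z,1) = z for all z ∈ D_t^n; (3) r(z,0) ∈ S^n for all z ∈ D_t^n; (4) r(z,s) = z for all z ∈ S^n and s ∈ [0,1]; (5) r is continuous. Hence r is a strong deformation retraction of D_t^n onto S^n. -/

import Mathlib

open Complex

/-- The componentwise real part of `z ∈ ℂ^{n+1}`, as a point of Euclidean `ℝ^{n+1}`. -/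
noncomputable def rePart (n : ℕ) (z : EuclideanSpace ℂ (Fin (n + 1))) :
    EuclideanSpace ℝ (Fin (n + 1)) := WithLp.toLp 2 (fun j => (z j).re)

/-- The componentwise imaginary part of `z ∈ ℂ^{n+1}`, as a point of Euclidean `ℝ^{n+1}`. -/
noncomputable def imPart (n : ℕ) (z : EuclideanSpace ℂ (Fin (n + 1))) :
    EuclideanSpace ℝ (Fin (n + 1)) := WithLp.toLp 2 (fun j => (z j).im)

/-- The retraction map `r(x + iy, s) = (√(1 + s²‖y‖²)/‖x‖)·x + i·s·y`. -/
noncomputable def retraction (n : ℕ) (z : EuclideanSpace ℂ (Fin (n + 1))) (s : ℝ) :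
    EuclideanSpace ℂ (Fin (n + 1)) :=
  WithLp.toLp 2 (fun j => ((Real.sqrt (1 + s ^ 2 * ‖imPart n z‖ ^ 2) / ‖rePart n z‖ : ℝ) : ℂ) * ((z j).re : ℂ) +
    Complex.I * (s : ℝ) * ((z j).im : ℂ))

/-- The domain `D_t^n = {z : z₁² + ⋯ + z_{n+1}² = 1, |z₁|² + ⋯ + |z_{n+1}|² < t}`. -/
def Dtn (n : ℕ) (t : ℝ) : Set (EuclideanSpace ℂ (Fin (n + 1))) :=
  {z | (∑ j, (z j) ^ 2) = 1 ∧ (∑ j, ‖z j‖ ^ 2) < t}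

/-- The real sphere `S^n = Q^n ∩ ℝ^{n+1}`. -/
def Sn (n : ℕ) : Set (EuclideanSpace ℂ (Fin (n + 1))) :=
  {z | (∑ j, (z j) ^ 2) = 1 ∧ ∀ j, (z j).im = 0}

/-!
On the quadric, `x = Re z` and `y = Im z` satisfy `‖x‖² = 1 + ‖y‖²` and `⟪x, y⟫ = 0`. The map
`r(·, s)` rescales `x` by `c = √(1 + s²‖y‖²)/‖x‖` and `y` by `s`, so the real part of `∑ r_j²` is
`c²‖x‖² - s²‖y‖² = 1` and its imaginary part `2cs⟪x, y⟫` vanishes, while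
`∑ |r_j|² = c²‖x‖² + s²‖y‖² = 1 + 2s²‖y‖²` grows with `s` and equals `∑ |z_j|²` at `s = 1`.
-/

section SumOfSquares

variable {ι : Type*} [Fintype ι]

lemma re_sum_sq (z : ι → ℂ) : (∑ j, z j ^ 2).re = ∑ j, (z j).re ^ 2 - ∑ j, (z j).im ^ 2 := by
  simp only [re_sum, sq, mul_re, Finset.sum_sub_distrib]

lemma im_sum_sq (z : ι → ℂ) : (∑ j, z j ^ 2).im = 2 * ∑ j, (z j).re * (z j).im := by
  simp only [im_sum, sq, mul_im, Finset.mul_sum]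
  exact Finset.sum_congr rfl fun j _ => by ring

lemma sum_norm_sq_eq (z : ι → ℂ) : ∑ j, ‖z j‖ ^ 2 = ∑ j, (z j).re ^ 2 + ∑ j, (z j).im ^ 2 := by
  simp only [Complex.sq_norm, normSq_apply, ← sq, Finset.sum_add_distrib]

lemma sum_re_sq_of_sum_sq_eq_one {z : ι → ℂ} (hz : ∑ j, z j ^ 2 = 1) :
    ∑ j, (z j).re ^ 2 = 1 + ∑ j, (z j).im ^ 2 := by
  have := congrArg re hz
  rw [re_sum_sq, one_re] at this
  linarith

lemma sum_re_mul_im_of_sum_sq_eq_one {z : ι → ℂ} (hz : ∑ j, z j ^ 2 = 1) :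
    ∑ j, (z j).re * (z j).im = 0 := by
  have := congrArg im hz
  rw [im_sum_sq, one_im] at this
  linarith

end SumOfSquares

section Retraction

variable {n : ℕ} {z : EuclideanSpace ℂ (Fin (n + 1))} {s : ℝ}

lemma norm_rePart_sq :
    ‖rePart n z‖ ^ 2 = ∑ j, (z j).re ^ 2 := by
  simp [EuclideanSpace.norm_sq_eq, rePart]

lemma norm_imPart_sq :
    ‖imPart n z‖ ^ 2 = ∑ j, (z j).im ^ 2 := by
  simp [EuclideanSpace.norm_sq_eq, imPart]

lemma norm_rePart_eq_sqrt (hz : ∑ j, z j ^ 2 = 1) :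
    ‖rePart n z‖ = √(1 + ‖imPart n z‖ ^ 2) := by
  rw [← Real.sqrt_sq (norm_nonneg _), norm_rePart_sq, norm_imPart_sq,
    sum_re_sq_of_sum_sq_eq_one hz]

lemma norm_rePart_pos (hz : ∑ j, z j ^ 2 = 1) : 0 < ‖rePart n z‖ := by
  rw [norm_rePart_eq_sqrt hz]
  positivity

@[simp]
lemma retraction_apply_re (j : Fin (n + 1)) :
    (retraction n z s j).re = √(1 + s ^ 2 * ‖imPart n z‖ ^ 2) / ‖rePart n z‖ * (z j).re := by
  simp [retraction]

@[simp]
lemma retraction_apply_im (j : Fin (n + 1)) : (retraction n z s j).im = s * (z j).im := by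
  simp [retraction]

lemma sum_retraction_re_sq (hz : ∑ j, z j ^ 2 = 1) :
    ∑ j, (retraction n z s j).re ^ 2 = 1 + s ^ 2 * ‖imPart n z‖ ^ 2 := by
  have hx := (norm_rePart_pos hz).ne'
  simp only [retraction_apply_re, mul_pow, ← Finset.mul_sum, ← norm_rePart_sq, div_pow,
    Real.sq_sqrt (by positivity : 0 ≤ 1 + s ^ 2 * ‖imPart n z‖ ^ 2)]
  field_simp

lemma sum_retraction_im_sq : ∑ j, (retraction n z s j).im ^ 2 = s ^ 2 * ‖imPart n z‖ ^ 2 := by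
  simp only [retraction_apply_im, mul_pow, ← Finset.mul_sum, norm_imPart_sq]

lemma sum_sq_retraction (hz : ∑ j, z j ^ 2 = 1) : ∑ j, retraction n z s j ^ 2 = 1 := by
  apply Complex.ext
  · rw [re_sum_sq, sum_retraction_re_sq hz, sum_retraction_im_sq, one_re]
    ring
  · have hxy := sum_re_mul_im_of_sum_sq_eq_one hz
    simp only [im_sum_sq, retraction_apply_re, retraction_apply_im, mul_mul_mul_comm,
      ← Finset.mul_sum, hxy, mul_zero, one_im]

lemma sum_norm_sq_retraction (hz : ∑ j, z j ^ 2 = 1) :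
    ∑ j, ‖retraction n z s j‖ ^ 2 = 1 + 2 * s ^ 2 * ‖imPart n z‖ ^ 2 := by
  rw [sum_norm_sq_eq, sum_retraction_re_sq hz, sum_retraction_im_sq]
  ring

lemma retraction_eq_self (hz : ∑ j, z j ^ 2 = 1)
    (hc : √(1 + s ^ 2 * ‖imPart n z‖ ^ 2) = ‖rePart n z‖) (him : ∀ j, s * (z j).im = (z j).im) :
    retraction n z s = z := by
  ext j
  apply Complex.ext
  · rw [retraction_apply_re, hc, div_self (norm_rePart_pos hz).ne', one_mul]
  · rw [retraction_apply_im, him]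

lemma retraction_one (hz : ∑ j, z j ^ 2 = 1) : retraction n z 1 = z :=
  retraction_eq_self hz (by rw [one_pow, one_mul, norm_rePart_eq_sqrt hz]) fun j => one_mul _

lemma sum_norm_sq_of_sum_sq_eq_one (hz : ∑ j, z j ^ 2 = 1) :
    ∑ j, ‖z j‖ ^ 2 = 1 + 2 * ‖imPart n z‖ ^ 2 := by
  simpa [retraction_one hz] using sum_norm_sq_retraction (s := 1) hz

lemma sum_norm_sq_retraction_le (hz : ∑ j, z j ^ 2 = 1) (hs : s ∈ Set.Icc (0 : ℝ) 1) :
    ∑ j, ‖retraction n z s j‖ ^ 2 ≤ ∑ j, ‖z j‖ ^ 2 := by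
  rw [sum_norm_sq_retraction hz, sum_norm_sq_of_sum_sq_eq_one hz]
  have := mul_le_mul_of_nonneg_right (pow_le_one₀ (n := 2) hs.1 hs.2) (sq_nonneg ‖imPart n z‖)
  linarith

@[fun_prop]
lemma continuous_rePart (n : ℕ) : Continuous (rePart n) :=
  (PiLp.continuous_toLp 2 _).comp (continuous_pi fun j => by fun_prop)

@[fun_prop]
lemma continuous_imPart (n : ℕ) : Continuous (imPart n) :=
  (PiLp.continuous_toLp 2 _).comp (continuous_pi fun j => by fun_prop)

lemma continuousOn_retraction (n : ℕ) :
    ContinuousOn (fun p : EuclideanSpace ℂ (Fin (n + 1)) × ℝ => retraction n p.1 p.2)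
      {p | rePart n p.1 ≠ 0} := by
  have hscale : ContinuousOn (fun p : EuclideanSpace ℂ (Fin (n + 1)) × ℝ =>
      √(1 + p.2 ^ 2 * ‖imPart n p.1‖ ^ 2) / ‖rePart n p.1‖) {p | rePart n p.1 ≠ 0} :=
    ContinuousOn.div (by fun_prop) (by fun_prop) fun _ hp => norm_ne_zero_iff.2 hp
  exact (PiLp.continuous_toLp 2 _).comp_continuousOn (continuousOn_pi.2 fun j => by fun_prop)

end Retraction

theorem stmt_3_general (n : ℕ) (t : ℝ) :
    (∀ z ∈ Dtn n t, ∀ s ∈ Set.Icc (0 : ℝ) 1, retraction n z s ∈ Dtn n t) ∧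
    (∀ z ∈ Dtn n t, retraction n z 1 = z) ∧
    (∀ z ∈ Dtn n t, retraction n z 0 ∈ Sn n) ∧
    (∀ z ∈ Sn n, ∀ s ∈ Set.Icc (0 : ℝ) 1, retraction n z s = z) ∧
    ContinuousOn (fun p : EuclideanSpace ℂ (Fin (n + 1)) × ℝ => retraction n p.1 p.2)
      (Dtn n t ×ˢ Set.Icc (0 : ℝ) 1) := by
  refine ⟨?_, fun z hz => retraction_one hz.1, ?_, ?_, ?_⟩
  · rintro z ⟨hz, hzt⟩ s hs
    exact ⟨sum_sq_retraction hz, (sum_norm_sq_retraction_le hz hs).trans_lt hzt⟩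
  · rintro z ⟨hz, -⟩
    exact ⟨sum_sq_retraction hz, fun j => by rw [retraction_apply_im, zero_mul]⟩
  · rintro z ⟨hz, him⟩ s -
    have hy : imPart n z = 0 := PiLp.ext him
    exact retraction_eq_self hz (by simp [norm_rePart_eq_sqrt hz, hy]) fun j => by simp [him j]
  · exact (continuousOn_retraction n).mono fun p hp => norm_ne_zero_iff.1 (norm_rePart_pos hp.1.1).ne'

/-- `retraction` is a strong deformation retraction of `D_t^n` onto `S^n`:
(1) it maps `D_t^n × [0,1]` into `D_t^n`; (2) at `s = 1` it is the identity on `D_t^n`;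
(3) at `s = 0` it lands in `S^n`; (4) it fixes `S^n` for all `s ∈ [0,1]`; (5) it is
continuous on `D_t^n × [0,1]`. -/
theorem stmt_3 (n : ℕ) (hn : 2 ≤ n) (t : ℝ) (ht : 1 < t) :
    (∀ z ∈ Dtn n t, ∀ s ∈ Set.Icc (0 : ℝ) 1, retraction n z s ∈ Dtn n t) ∧
    (∀ z ∈ Dtn n t, retraction n z 1 = z) ∧
    (∀ z ∈ Dtn n t, retraction n z 0 ∈ Sn n) ∧
    (∀ z ∈ Sn n, ∀ s ∈ Set.Icc (0 : ℝ) 1, retraction n z s = z) ∧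
    ContinuousOn (fun p : EuclideanSpace ℂ (Fin (n + 1)) × ℝ => retraction n p.1 p.2)
      (Dtn n t ×ˢ Set.Icc (0 : ℝ) 1) :=
  stmt_3_general n t
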